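/- The logarithm of the stabilizer norm lower-bounds the log-free robustness of magic: for every n-qubit state ρ that admits at least one finite decomposition ρ = Σ_i x_i |ψ_i⟩⟨ψ_i| with real coefficients x_i and pure stabilizer states |ψ_i⟩, one has ln D(ρ) ≤ LR(ρ). -/

import Mathlib

open Matrix Complex BigOperators
open scoped ComplexOrder

noncomputable section

/-- Index type for `n` qubits: functions `Fin n → Fin 2` (cardinality `2^n`). -/
abbrev QIdx (n : ℕ) := Fin n → Fin 2

/-- The four single-qubit Pauli matrices: `σ⁰ = I`, `σ¹ = σˣ`, `σ² = σᶻ`, `σ³ = σʸ`. -/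
def pauliMat : Fin 4 → Matrix (Fin 2) (Fin 2) ℂ
  | 0 => 1
  | 1 => !![0, 1; 1, 0]
  | 2 => !![1, 0; 0, -1]
  | 3 => !![0, -Complex.I; Complex.I, 0]

/-- The Pauli string `σ^{a_1} ⊗ ⋯ ⊗ σ^{a_n}` as a `2^n × 2^n` matrix. -/
def pauliString {n : ℕ} (a : Fin n → Fin 4) : Matrix (QIdx n) (QIdx n) ℂ :=
  fun i j => ∏ k, pauliMat (a k) (i k) (j k)

/-- An `n`-qubit state: positive semidefinite with unit trace. -/
def IsState {n : ℕ} (ρ : Matrix (QIdx n) (QIdx n) ℂ) : Prop :=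
  ρ.PosSemidef ∧ ρ.trace = 1

/-- The `α`-moment of the Pauli spectrum `A_α(ρ) = 2^{-n} ∑_P |tr(ρP)|^{2α}`. -/
def Amom {n : ℕ} (α : ℝ) (ρ : Matrix (QIdx n) (QIdx n) ℂ) : ℝ :=
  ((2:ℝ)^n)⁻¹ * ∑ a : Fin n → Fin 4, (‖(ρ * pauliString a).trace‖) ^ (2 * α)

/-- The 2-Rényi entropy `S₂(ρ) = -ln tr(ρ²)`. -/
def S2 {n : ℕ} (ρ : Matrix (QIdx n) (QIdx n) ℂ) : ℝ :=
  - Real.log ((ρ * ρ).trace.re)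

/-- The magic witness `W_α(ρ) = (1/(1-α)) ln A_α(ρ) - ((1-2α)/(1-α)) S₂(ρ)`. -/
def Wit {n : ℕ} (α : ℝ) (ρ : Matrix (QIdx n) (QIdx n) ℂ) : ℝ :=
  (1 / (1 - α)) * Real.log (Amom α ρ) - ((1 - 2*α)/(1 - α)) * S2 ρ

/-- The stabilizer norm `D(ρ) = A_{1/2}(ρ) = 2^{-n} ∑_P |tr(ρP)|`. -/
def Dnorm {n : ℕ} (ρ : Matrix (QIdx n) (QIdx n) ℂ) : ℝ :=
  Amom (1/2) ρ

/-- A Clifford unitary: unitary mapping every Pauli string to `±` a Pauli string. -/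
def IsCliffordUnitary {n : ℕ} (U : Matrix (QIdx n) (QIdx n) ℂ) : Prop :=
  U ∈ Matrix.unitaryGroup (QIdx n) ℂ ∧
    ∀ a : Fin n → Fin 4, ∃ (b : Fin n → Fin 4) (ε : ℝ),
      (ε = 1 ∨ ε = -1) ∧ U * pauliString a * Uᴴ = (ε : ℂ) • pauliString b

/-- The computational all-zeros basis vector `|0⟩^{⊗n}`. -/
def zeroVec (n : ℕ) : QIdx n → ℂ :=
  fun i => if (∀ k, i k = 0) then 1 else 0

/-- A pure stabilizer state vector: `U|0⟩^{⊗n}` for a Clifford unitary `U`. -/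
def IsPureStab {n : ℕ} (ψ : QIdx n → ℂ) : Prop :=
  ∃ U, IsCliffordUnitary U ∧ ψ = U.mulVec (zeroVec n)

/-- The rank-one projector `|ψ⟩⟨ψ|`. -/
def proj {n : ℕ} (ψ : QIdx n → ℂ) : Matrix (QIdx n) (QIdx n) ℂ :=
  Matrix.vecMulVec ψ (star ψ)

/-- A mixed stabilizer state: a finite convex combination of pure stabilizer projectors. -/
def IsMixedStab {n : ℕ} (ρ : Matrix (QIdx n) (QIdx n) ℂ) : Prop :=
  ∃ (k : ℕ) (p : Fin k → ℝ) (ψ : Fin k → QIdx n → ℂ),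
    (∀ i, 0 ≤ p i) ∧ (∑ i, p i = 1) ∧ (∀ i, IsPureStab (ψ i)) ∧
    ρ = ∑ i, (p i : ℂ) • proj (ψ i)

/-- The set of values `ln ∑ᵢ |xᵢ|` over finite real stabilizer decompositions of `ρ`. -/
def StabDecomps {n : ℕ} (ρ : Matrix (QIdx n) (QIdx n) ℂ) : Set ℝ :=
  { r | ∃ (k : ℕ) (x : Fin k → ℝ) (ψ : Fin k → QIdx n → ℂ),
      (∀ i, IsPureStab (ψ i)) ∧ ρ = ∑ i, (x i : ℂ) • proj (ψ i) ∧
      r = Real.log (∑ i, |x i|) }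

/-- The log-free robustness of magic. -/
def LR {n : ℕ} (ρ : Matrix (QIdx n) (QIdx n) ℂ) : ℝ := sInf (StabDecomps ρ)

open Classical in
/-- Positive-semidefinite square root (junk value `0` off the PSD cone). -/
def psdSqrt {n : ℕ} (A : Matrix (QIdx n) (QIdx n) ℂ) : Matrix (QIdx n) (QIdx n) ℂ :=
  if h : A.PosSemidef then
    (h.1.eigenvectorUnitary : Matrix (QIdx n) (QIdx n) ℂ) *
      diagonal ((↑) ∘ Real.sqrt ∘ h.1.eigenvalues) *
      (star h.1.eigenvectorUnitary : Matrix (QIdx n) (QIdx n) ℂ)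
  else 0

/-- The Uhlmann fidelity `F(ρ,σ) = (tr √(√ρ σ √ρ))²`. -/
def fidelity {n : ℕ} (ρ σ : Matrix (QIdx n) (QIdx n) ℂ) : ℝ :=
  ((psdSqrt (psdSqrt ρ * σ * psdSqrt ρ)).trace.re) ^ 2

/-- The stabilizer fidelity `D_F(ρ) = inf { -ln F(ρ,σ) : σ a mixed stabilizer state }`. -/
def DF {n : ℕ} (ρ : Matrix (QIdx n) (QIdx n) ℂ) : ℝ :=
  sInf { r | ∃ σ, IsMixedStab σ ∧ r = - Real.log (fidelity ρ σ) }

/-- Filtered Pauli moment `Ã_α(ρ) = (2^n A_α(ρ) - 1)/(2^n - 1)`. -/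
def Atil {n : ℕ} (α : ℝ) (ρ : Matrix (QIdx n) (QIdx n) ℂ) : ℝ :=
  ((2:ℝ)^n * Amom α ρ - 1) / ((2:ℝ)^n - 1)

/-- Filtered stabilizer norm `D̃(ρ) = (2^n D(ρ) - 1)/(2^n - 1)`. -/
def Dtil {n : ℕ} (ρ : Matrix (QIdx n) (QIdx n) ℂ) : ℝ :=
  ((2:ℝ)^n * Dnorm ρ - 1) / ((2:ℝ)^n - 1)

/-- Filtered magic witness `W̃_α(ρ) = (1/(1-α)) ln Ã_α(ρ) + ((1-2α)/(1-α)) ln Ã₁(ρ)`. -/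
def Wtil {n : ℕ} (α : ℝ) (ρ : Matrix (QIdx n) (QIdx n) ℂ) : ℝ :=
  (1/(1-α)) * Real.log (Atil α ρ) + ((1 - 2*α)/(1-α)) * Real.log (Atil 1 ρ)

/-- The maximally mixed state `I/2^n`. -/
def maxMixed (n : ℕ) : Matrix (QIdx n) (QIdx n) ℂ := ((2:ℂ)^n)⁻¹ • 1

/-- The single-qubit T-state vector `|T⟩ = (|0⟩ + e^{-iπ/4}|1⟩)/√2`. -/
def Tket : QIdx 1 → ℂ :=
  fun i => if i 0 = 0 then (Real.sqrt 2 : ℂ)⁻¹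
           else Complex.exp (-(Real.pi/4 : ℂ) * Complex.I) * (Real.sqrt 2 : ℂ)⁻¹

/-- The depolarized T-state `ρ_p = (1-p)|T⟩⟨T| + p·I₂/2`. -/
def rhoDep (p : ℝ) : Matrix (QIdx 1) (QIdx 1) ℂ :=
  ((1 - p : ℝ) : ℂ) • proj Tket + ((p : ℝ) : ℂ) • (((2:ℂ))⁻¹ • 1)

/-!
Every stabilizer projector has stabilizer norm exactly one: conjugation by the Clifford unitary
permutes the Pauli strings up to sign, so the Pauli spectrum of `U|0⟩⟨0|U†` is a signed
rearrangement of that of `|0⟩⟨0|`, whose entries `⟨0|P|0⟩` are `1` on the `2ⁿ` strings built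
from `σ⁰, σᶻ` and vanish otherwise. Since `D` is a seminorm, `D(ρ) ≤ ∑ᵢ |xᵢ|` for every
stabilizer decomposition, and `D(ρ) > 0` because the identity string contributes `|tr ρ| = 1`.
-/

namespace Matrix

variable {ι κ R : Type*} [Fintype ι] [CommSemiring R]

def piKronecker (A : ι → Matrix κ κ R) : Matrix (ι → κ) (ι → κ) R :=
  of fun i j => ∏ k, A k (i k) (j k)

theorem piKronecker_mul [DecidableEq ι] [Fintype κ] (A B : ι → Matrix κ κ R) :
    piKronecker A * piKronecker B = piKronecker (A * B) := by
  ext i j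
  simp only [piKronecker, mul_apply, of_apply, Pi.mul_apply, Fintype.prod_sum,
    Finset.prod_mul_distrib]

theorem trace_piKronecker [DecidableEq ι] [Fintype κ] (A : ι → Matrix κ κ R) :
    (piKronecker A).trace = ∏ k, (A k).trace := by
  simp only [trace, diag, piKronecker, of_apply, Fintype.prod_sum]

theorem piKronecker_one [DecidableEq κ] : piKronecker (fun _ : ι => (1 : Matrix κ κ R)) = 1 := by
  ext i j
  simp only [piKronecker, of_apply, one_apply, Fintype.prod_ite_zero, Finset.prod_const_one,
    funext_iff]

theorem trace_conj_mul_conj {m α : Type*} [Fintype m] [DecidableEq m] [CommRing α] [StarRing α]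
    {U : Matrix m m α} (hU : U ∈ unitaryGroup m α) (A B : Matrix m m α) :
    (U * A * Uᴴ * (U * B * Uᴴ)).trace = (A * B).trace := by
  have hUU : Uᴴ * U = 1 := mem_unitaryGroup_iff'.mp hU
  rw [show U * A * Uᴴ * (U * B * Uᴴ) = U * (A * B) * Uᴴ by
      simp only [Matrix.mul_assoc, ← Matrix.mul_assoc Uᴴ U, hUU, Matrix.one_mul],
    trace_mul_cycle, ← Matrix.mul_assoc, hUU, Matrix.one_mul]

end Matrix

theorem pauliString_eq_piKronecker {n : ℕ} (a : Fin n → Fin 4) :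
    pauliString a = piKronecker (fun k => pauliMat (a k)) := rfl

theorem trace_pauliMat_mul_pauliMat (s t : Fin 4) :
    (pauliMat s * pauliMat t).trace = if s = t then 2 else 0 := by
  fin_cases s <;> fin_cases t <;> norm_num [pauliMat, trace_fin_two]

theorem trace_pauliString_mul_pauliString {n : ℕ} (a b : Fin n → Fin 4) :
    (pauliString a * pauliString b).trace = if a = b then (2 : ℂ) ^ n else 0 := by
  simp only [pauliString_eq_piKronecker, piKronecker_mul, trace_piKronecker, Pi.mul_apply,
    trace_pauliMat_mul_pauliMat, Fintype.prod_ite_zero, Finset.prod_const, Finset.card_univ,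
    Fintype.card_fin, funext_iff]

theorem pauliString_zero {n : ℕ} : pauliString (0 : Fin n → Fin 4) = 1 := by
  rw [pauliString_eq_piKronecker]
  exact piKronecker_one

theorem sum_norm_pauliString_apply_zero_zero (n : ℕ) :
    ∑ a : Fin n → Fin 4, ‖pauliString a 0 0‖ = 2 ^ n := by
  have h : ∑ s : Fin 4, ‖pauliMat s 0 0‖ = 2 := by norm_num [Fin.sum_univ_four, pauliMat]
  simp only [pauliString, norm_prod, Pi.zero_apply]
  rw [← Fintype.prod_sum (fun _ s => ‖pauliMat s 0 0‖), h, Finset.prod_const, Finset.card_univ,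
    Fintype.card_fin]

theorem IsCliffordUnitary.exists_perm_pauliString {n : ℕ} {U : Matrix (QIdx n) (QIdx n) ℂ}
    (hU : IsCliffordUnitary U) :
    ∃ (e : Equiv.Perm (Fin n → Fin 4)) (ε : (Fin n → Fin 4) → ℝ), (∀ a, ε a = 1 ∨ ε a = -1) ∧
      ∀ a, U * pauliString a * Uᴴ = (ε a : ℂ) • pauliString (e a) := by
  choose b ε hε hb using hU.2
  -- Conjugation preserves the trace form, under which distinct Pauli strings are orthogonal.
  have hinj : Function.Injective b := by
    intro a a' hbb
    by_contra hne
    have h := trace_conj_mul_conj hU.1 (pauliString a) (pauliString a')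
    rw [hb, hb, hbb, smul_mul_smul_comm, trace_smul, trace_pauliString_mul_pauliString,
      trace_pauliString_mul_pauliString, if_pos rfl, if_neg hne, smul_eq_mul] at h
    rcases hε a with ha | ha <;> rcases hε a' with ha' | ha' <;> simp [ha, ha'] at h
  exact ⟨Equiv.ofBijective b hinj.bijective_of_finite, ε, hε, hb⟩

theorem proj_mulVec {n : ℕ} (U : Matrix (QIdx n) (QIdx n) ℂ) (v : QIdx n → ℂ) :
    proj (U *ᵥ v) = U * proj v * Uᴴ := by
  rw [proj, proj, mul_vecMulVec, vecMulVec_mul, star_mulVec]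

theorem trace_proj_zeroVec_mul {n : ℕ} (M : Matrix (QIdx n) (QIdx n) ℂ) :
    (proj (zeroVec n) * M).trace = M 0 0 := by
  have h : zeroVec n = Pi.single 0 1 := by
    ext i
    simp [zeroVec, Pi.single_apply, funext_iff]
  simp [h, proj, trace, mul_apply, vecMulVec_apply, Pi.single_apply]

theorem sum_norm_trace_proj_mul_pauliString {n : ℕ} {ψ : QIdx n → ℂ} (hψ : IsPureStab ψ) :
    ∑ a : Fin n → Fin 4, ‖(proj ψ * pauliString a).trace‖ = 2 ^ n := by
  obtain ⟨U, hU, rfl⟩ := hψ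
  obtain ⟨e, ε, hε, he⟩ := hU.exists_perm_pauliString
  rw [← Equiv.sum_comp e, ← sum_norm_pauliString_apply_zero_zero]
  refine Finset.sum_congr rfl fun c _ => ?_
  have h : (ε c : ℂ) • (proj (U *ᵥ zeroVec n) * pauliString (e c)).trace = pauliString c 0 0 := by
    rw [← trace_smul, ← Matrix.mul_smul, ← he, proj_mulVec, trace_conj_mul_conj hU.1,
      trace_proj_zeroVec_mul]
  rw [← h, norm_smul]
  rcases hε c with hc | hc <;> simp [hc]

theorem Dnorm_eq {n : ℕ} (ρ : Matrix (QIdx n) (QIdx n) ℂ) :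
    Dnorm ρ = ((2 : ℝ) ^ n)⁻¹ * ∑ a : Fin n → Fin 4, ‖(ρ * pauliString a).trace‖ := by
  norm_num [Dnorm, Amom]

theorem Dnorm_pos_of_trace_ne_zero {n : ℕ} {ρ : Matrix (QIdx n) (QIdx n) ℂ} (h : ρ.trace ≠ 0) :
    0 < Dnorm ρ := by
  rw [Dnorm_eq]
  refine mul_pos (by positivity) (lt_of_lt_of_le ?_ (Finset.single_le_sum
    (fun a _ => norm_nonneg (ρ * pauliString a).trace) (Finset.mem_univ 0)))
  simpa [pauliString_zero] using h

theorem Dnorm_proj_of_isPureStab {n : ℕ} {ψ : QIdx n → ℂ} (hψ : IsPureStab ψ) :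
    Dnorm (proj ψ) = 1 := by
  rw [Dnorm_eq, sum_norm_trace_proj_mul_pauliString hψ, inv_mul_cancel₀ (by positivity)]

theorem Dnorm_sum_smul_le {n : ℕ} {ι : Type*} (s : Finset ι) (x : ι → ℝ)
    (A : ι → Matrix (QIdx n) (QIdx n) ℂ) :
    Dnorm (∑ i ∈ s, (x i : ℂ) • A i) ≤ ∑ i ∈ s, |x i| * Dnorm (A i) := by
  calc Dnorm (∑ i ∈ s, (x i : ℂ) • A i)
      ≤ ((2 : ℝ) ^ n)⁻¹ * ∑ a, ∑ i ∈ s, |x i| * ‖(A i * pauliString a).trace‖ := by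
        rw [Dnorm_eq]
        gcongr with a
        rw [Finset.sum_mul, trace_sum]
        refine (norm_sum_le _ _).trans_eq ?_
        simp [trace_smul]
    _ = ∑ i ∈ s, |x i| * Dnorm (A i) := by
        simp only [Dnorm_eq, Finset.mul_sum]
        rw [Finset.sum_comm]
        exact Finset.sum_congr rfl fun i _ => Finset.sum_congr rfl fun a _ => by ring

/-- the log of the stabilizer norm lower-bounds the log-free
robustness of magic: `ln D(ρ) ≤ LR(ρ)` for states admitting a stabilizer
decomposition. -/
theorem log_stabNorm_le_LR {n : ℕ} (ρ : Matrix (QIdx n) (QIdx n) ℂ)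
    (hρ : IsState ρ) (hdec : (StabDecomps ρ).Nonempty) :
    Real.log (Dnorm ρ) ≤ LR ρ := by
  have hD : 0 < Dnorm ρ := Dnorm_pos_of_trace_ne_zero (by simp [hρ.2])
  refine le_csInf hdec ?_
  rintro _ ⟨k, x, ψ, hψ, rfl, rfl⟩
  refine Real.log_le_log hD ((Dnorm_sum_smul_le _ _ _).trans_eq ?_)
  simp [Dnorm_proj_of_isPureStab (hψ _)]

end
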